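/- arXiv:1109.6493 — 4 statements merged into one kernel-verified Lean document; each statement's English description precedes it below -/
import Mathlib

section
/- Let Y = ξ where ξ ~ N(0, I_p) in R^p (i.e., θ = 0) and let θ* = (1 - c/‖Y‖)Y with c = (p-1)Γ((p-1)/2)/(√2 Γ(p/2)). Then the risk E‖θ*‖² equals p - [(p-1)Γ((p-1)/2)/(√2 Γ(p/2))]². -/
/-!
Expanding the square, `(1 - c/‖Y‖)² ‖Y‖² = ‖Y‖² - 2c‖Y‖ + c²`. In polar coordinates the Gaussian
moments are `E‖Y‖^q = 2^(q/2) Γ((p+q)/2) / Γ(p/2)`, so `E‖Y‖² = p` and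
`E‖Y‖ = √2 Γ((p+1)/2) / Γ(p/2)`, which is `c` by `Γ(s+1) = s Γ(s)`. Hence the risk is
`p - 2c² + c² = p - c²`.
-/

open MeasureTheory Real Set

theorem integrableOn_rpow_mul_exp_neg_sq_div_two {s : ℝ} (hs : -1 < s) :
    IntegrableOn (fun r : ℝ => r ^ s * exp (-r ^ 2 / 2)) (Ioi 0) := by
  convert integrableOn_rpow_mul_exp_neg_mul_sq one_half_pos hs using 4; ring

theorem integral_rpow_mul_exp_neg_sq_div_two {s : ℝ} (hs : -1 < s) :
    ∫ r in Ioi (0 : ℝ), r ^ s * exp (-r ^ 2 / 2) = 2 ^ ((s - 1) / 2) * Gamma ((s + 1) / 2) := by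
  have h := integral_rpow_mul_exp_neg_mul_rpow two_pos hs one_half_pos
  simp only [rpow_two] at h
  rw [show (fun r : ℝ => r ^ s * exp (-r ^ 2 / 2)) = fun r => r ^ s * exp (-(1 / 2) * r ^ 2) by
    ext; ring_nf, h, one_div, inv_rpow zero_le_two, ← rpow_neg zero_le_two,
    ← rpow_neg_one 2, ← rpow_add two_pos]
  ring_nf

theorem pow_pred_mul_rpow {r : ℝ} (hr : 0 < r) {n : ℕ} (hn : n ≠ 0) (q : ℝ) :
    r ^ (n - 1) * r ^ q = r ^ ((n : ℝ) - 1 + q) := by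
  rw [rpow_add hr, ← rpow_natCast, Nat.cast_pred (Nat.pos_of_ne_zero hn)]

/-- The density of the standard Gaussian on an `n`-dimensional Euclidean space, at a point of
norm `r`. -/
noncomputable def stdGaussianDensity (n : ℕ) (r : ℝ) : ℝ := (2 * π) ^ (-(n : ℝ) / 2) * exp (-r ^ 2 / 2)

theorem integral_fun_sqrt_sum_sq {ι : Type*} [Fintype ι] (f : ℝ → ℝ) :
    ∫ x : ι → ℝ, f √(∑ i, x i ^ 2) = ∫ x : EuclideanSpace ℝ ι, f ‖x‖ := by
  rw [← (EuclideanSpace.volume_preserving_symm_measurableEquiv_toLp ι).integral_comp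
    (MeasurableEquiv.toLp 2 (ι → ℝ)).symm.measurableEmbedding]
  simp [EuclideanSpace.norm_eq]

namespace EuclideanSpace

variable {ι : Type*} [Fintype ι] [Nonempty ι]

open Fintype

theorem integral_fun_norm (f : ℝ → ℝ) :
    ∫ x : EuclideanSpace ℝ ι, f ‖x‖
      = 2 * π ^ ((card ι : ℝ) / 2) / Gamma ((card ι : ℝ) / 2) *
          ∫ r in Ioi (0 : ℝ), r ^ (card ι - 1) * f r := by
  have hn : (0 : ℝ) < card ι / 2 := by positivity
  rw [integral_fun_norm_addHaar, finrank_euclideanSpace, measureReal_def, volume_ball,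
    nsmul_eq_mul, smul_eq_mul]
  simp only [ENNReal.ofReal_one, one_pow, one_mul, smul_eq_mul]
  rw [ENNReal.toReal_ofReal (by positivity), Gamma_add_one hn.ne', sqrt_eq_rpow, ← rpow_natCast,
    ← rpow_mul pi_pos.le]
  field_simp

theorem integrable_norm_rpow_mul_stdGaussianDensity {q : ℝ} (hq : -(card ι : ℝ) < q) :
    Integrable fun x : EuclideanSpace ℝ ι => ‖x‖ ^ q * stdGaussianDensity (card ι) ‖x‖ := by
  rw [integrable_fun_norm_addHaar volume (f := fun r => r ^ q * stdGaussianDensity (card ι) r),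
    finrank_euclideanSpace]
  refine IntegrableOn.congr_fun ((integrableOn_rpow_mul_exp_neg_sq_div_two
    (s := (card ι : ℝ) - 1 + q) (by linarith)).const_mul ((2 * π) ^ (-(card ι : ℝ) / 2)))
    (fun r (hr : 0 < r) => ?_) measurableSet_Ioi
  rw [smul_eq_mul, ← pow_pred_mul_rpow hr card_ne_zero, stdGaussianDensity]
  ring

theorem integral_norm_rpow_mul_stdGaussianDensity {q : ℝ} (hq : -(card ι : ℝ) < q) :
    ∫ x : EuclideanSpace ℝ ι, ‖x‖ ^ q * stdGaussianDensity (card ι) ‖x‖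
      = 2 ^ (q / 2) * Gamma ((card ι + q) / 2) / Gamma (card ι / 2) := by
  have radial : ∀ r ∈ Ioi (0 : ℝ), r ^ (card ι - 1) * (r ^ q * stdGaussianDensity (card ι) r)
      = (2 * π) ^ (-(card ι : ℝ) / 2) * (r ^ ((card ι : ℝ) - 1 + q) * exp (-r ^ 2 / 2)) :=
    fun r (hr : 0 < r) => by rw [← pow_pred_mul_rpow hr card_ne_zero, stdGaussianDensity]; ring
  rw [integral_fun_norm (fun r => r ^ q * stdGaussianDensity (card ι) r),
    setIntegral_congr_fun measurableSet_Ioi radial, integral_const_mul,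
    integral_rpow_mul_exp_neg_sq_div_two (by linarith), mul_rpow zero_le_two pi_pos.le,
    show ((card ι : ℝ) - 1 + q + 1) / 2 = (card ι + q) / 2 by ring]
  have h2 : 2 * (2 : ℝ) ^ (-(card ι : ℝ) / 2) * 2 ^ (((card ι : ℝ) - 1 + q - 1) / 2)
      = 2 ^ (q / 2) := by
    rw [mul_assoc, ← rpow_add two_pos,
      show -(card ι : ℝ) / 2 + ((card ι - 1 + q - 1) / 2) = q / 2 - 1 by ring,
      rpow_sub_one two_ne_zero]
    ring
  have hπ : π ^ ((card ι : ℝ) / 2) * π ^ (-(card ι : ℝ) / 2) = 1 := by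
    rw [← rpow_add pi_pos, neg_div, add_neg_cancel, rpow_zero]
  linear_combination (Gamma ((card ι + q) / 2) / Gamma (card ι / 2)) *
    (π ^ ((card ι : ℝ) / 2) * π ^ (-(card ι : ℝ) / 2) * h2 + 2 ^ (q / 2) * hπ)

theorem integral_one_sub_div_norm_sq_mul_norm_sq_mul_stdGaussianDensity (c : ℝ) :
    ∫ x : EuclideanSpace ℝ ι,
        ((1 - c / ‖x‖) ^ 2 * ‖x‖ ^ 2) * stdGaussianDensity (card ι) ‖x‖
      = card ι - 2 * c * (√2 * Gamma ((card ι + 1) / 2) / Gamma (card ι / 2)) + c ^ 2 := by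
  set φ : EuclideanSpace ℝ ι → ℝ := fun x => stdGaussianDensity (card ι) ‖x‖
  have hn : (0 : ℝ) < card ι := by positivity
  have hG : Gamma (card ι / 2) ≠ 0 := (Gamma_pos_of_pos (by positivity)).ne'
  have m2 : ∫ x, ‖x‖ ^ (2 : ℝ) * φ x = card ι := by
    rw [integral_norm_rpow_mul_stdGaussianDensity (by linarith),
      show ((card ι : ℝ) + 2) / 2 = card ι / 2 + 1 by ring, Gamma_add_one (by positivity)]
    field_simp
    norm_num
  have m1 : ∫ x, ‖x‖ ^ (1 : ℝ) * φ x = √2 * Gamma ((card ι + 1) / 2) / Gamma (card ι / 2) := by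
    rw [integral_norm_rpow_mul_stdGaussianDensity (by linarith), sqrt_eq_rpow, one_div]
  have m0 : ∫ x, ‖x‖ ^ (0 : ℝ) * φ x = 1 := by
    rw [integral_norm_rpow_mul_stdGaussianDensity (by linarith)]
    simp [hG]
  have i2 := integrable_norm_rpow_mul_stdGaussianDensity (ι := ι) (q := 2) (by linarith)
  have i1 := integrable_norm_rpow_mul_stdGaussianDensity (ι := ι) (q := 1) (by linarith)
  have i0 := integrable_norm_rpow_mul_stdGaussianDensity (ι := ι) (q := 0) (by linarith)
  -- fails only at `x = 0`, where `c / 0 = 0`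
  have expand : ∀ᵐ x, ((1 - c / ‖x‖) ^ 2 * ‖x‖ ^ 2) * φ x
      = ‖x‖ ^ (2 : ℝ) * φ x - 2 * c * (‖x‖ ^ (1 : ℝ) * φ x) + c ^ 2 * (‖x‖ ^ (0 : ℝ) * φ x) := by
    filter_upwards [volume.ae_ne 0] with x hx
    have : ‖x‖ ≠ 0 := norm_ne_zero_iff.mpr hx
    rw [rpow_two, rpow_one, rpow_zero]
    field_simp
    ring
  rw [integral_congr_ae expand, integral_add, integral_sub, integral_const_mul, integral_const_mul,
    m2, m1, m0, mul_one]
  exacts [i2, i1.const_mul _, i2.sub (i1.const_mul _), i0.const_mul _]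

end EuclideanSpace

/-- Let `Y = ξ` with `ξ ~ N(0, I_p)` in `ℝ^p` (i.e. `θ = 0`), and let
`θ* = (1 - c/‖Y‖)Y` with `c = (p-1)Γ((p-1)/2)/(√2 Γ(p/2))`.  Then the risk
`E‖θ*‖²` equals `p - [(p-1)Γ((p-1)/2)/(√2 Γ(p/2))]²`.  Since
`‖θ*‖² = (1 - c/‖Y‖)² ‖Y‖²`, the risk is written as a Gaussian-density integral. -/
theorem stmt_2 (p : ℕ) (hp : 2 ≤ p) (c : ℝ)
    (hc : c = ((p : ℝ) - 1) * Real.Gamma (((p : ℝ) - 1) / 2) /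
        (Real.sqrt 2 * Real.Gamma ((p : ℝ) / 2))) :
    (∫ x : Fin p → ℝ,
        ((1 - c / Real.sqrt (∑ i, x i ^ 2)) ^ 2 * (∑ i, x i ^ 2)) *
          ((2 * π) ^ (-(p : ℝ) / 2) * Real.exp (-(∑ i, x i ^ 2) / 2)))
      = (p : ℝ) - (((p : ℝ) - 1) * Real.Gamma (((p : ℝ) - 1) / 2) /
          (Real.sqrt 2 * Real.Gamma ((p : ℝ) / 2))) ^ 2 := by
  have : NeZero p := ⟨by omega⟩
  have hp' : (2 : ℝ) ≤ p := by exact_mod_cast hp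
  have hc_mean : c = √2 * Gamma ((p + 1) / 2) / Gamma (p / 2) := by
    have hΓ : ((p : ℝ) - 1) * Gamma ((p - 1) / 2) = 2 * Gamma ((p + 1) / 2) := by
      rw [show ((p : ℝ) + 1) / 2 = (p - 1) / 2 + 1 by ring, Gamma_add_one (by intro h; linarith)]
      ring
    have hG : Gamma (p / 2) ≠ 0 := (Gamma_pos_of_pos (by positivity)).ne'
    rw [hc, hΓ]
    field_simp
    rw [sq_sqrt zero_le_two]
  have h := EuclideanSpace.integral_one_sub_div_norm_sq_mul_norm_sq_mul_stdGaussianDensity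
    (ι := Fin p) c
  rw [Fintype.card_fin, ← hc_mean, ← integral_fun_sqrt_sum_sq
    (fun r => ((1 - c / r) ^ 2 * r ^ 2) * stdGaussianDensity p r)] at h
  rw [← hc]
  refine (integral_congr_ae (ae_of_all _ fun x => ?_)).trans (h.trans (by ring))
  rw [stdGaussianDensity, sq_sqrt (by positivity)]
end

section
/- The sequence r_p = p - [(p-1)Γ((p-1)/2)/(√2 Γ(p/2))]² converges to 1/2 as p → ∞. -/
/-!
Write `g x = (Γ(x + 1/2) / Γ(x))²`; the squared quantity in the theorem is `2 g(p/2)`.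
Log-convexity of `Γ` gives `g x ≤ x`. The functional equation gives
`g (x + 1) = g x · (x + 1/2)² / x²`, under which `(4x + 1) / x² · g x` increases with `x ↦ x + 1`;
since it is at most `4 + 1/(x + n)` at `x + n`, it is at most `4`, i.e. `g x ≤ 4x² / (4x + 1)`.
As `g x · g (x + 1/2) = x²`, this upper bound turns into the lower bound `x - 1/4 ≤ g x`,
so `g x = x - 1/4 + O(1/x)`.
-/

open Filter Real Topology

noncomputable def gammaRatioSq (x : ℝ) : ℝ := (Gamma (x + 1 / 2) / Gamma x) ^ 2

theorem Real.Gamma_add_half_sq_le {x : ℝ} (hx : 0 < x) :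
    Gamma (x + 1 / 2) ^ 2 ≤ Gamma x * Gamma (x + 1) := by
  have h := Gamma_mul_add_mul_le_rpow_Gamma_mul_rpow_Gamma hx (by linarith : 0 < x + 1)
    (by norm_num : (0 : ℝ) < 1 / 2) (by norm_num : (0 : ℝ) < 1 / 2) (by norm_num)
  rw [show 1 / 2 * x + 1 / 2 * (x + 1) = x + 1 / 2 by ring, ← sqrt_eq_rpow, ← sqrt_eq_rpow,
    ← sqrt_mul (Gamma_pos_of_pos hx).le] at h
  calc Gamma (x + 1 / 2) ^ 2 ≤ √(Gamma x * Gamma (x + 1)) ^ 2 :=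
        pow_le_pow_left₀ (Gamma_pos_of_pos (by linarith)).le h 2
    _ = Gamma x * Gamma (x + 1) :=
        sq_sqrt (mul_pos (Gamma_pos_of_pos hx) (Gamma_pos_of_pos (by linarith))).le

namespace gammaRatioSq

variable {x : ℝ}

theorem pos (hx : 0 < x) : 0 < gammaRatioSq x := by
  have hΓ := Gamma_pos_of_pos hx
  have hΓ' := Gamma_pos_of_pos (by linarith : 0 < x + 1 / 2)
  unfold gammaRatioSq; positivity

theorem mul_add_half (hx : 0 < x) : gammaRatioSq x * gammaRatioSq (x + 1 / 2) = x ^ 2 := by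
  have hΓ := (Gamma_pos_of_pos hx).ne'
  have hΓ' := (Gamma_pos_of_pos (by linarith : 0 < x + 1 / 2)).ne'
  rw [gammaRatioSq, gammaRatioSq, add_assoc, show (1 / 2 + 1 / 2 : ℝ) = 1 by norm_num,
    Gamma_add_one hx.ne']
  field_simp

theorem add_one (hx : 0 < x) : gammaRatioSq (x + 1) = gammaRatioSq x * ((x + 1 / 2) / x) ^ 2 := by
  have hΓ := (Gamma_pos_of_pos hx).ne'
  rw [gammaRatioSq, gammaRatioSq, add_right_comm, Gamma_add_one (by linarith : x + 1 / 2 ≠ 0),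
    Gamma_add_one hx.ne']
  field_simp

theorem le_self (hx : 0 < x) : gammaRatioSq x ≤ x := by
  have hΓ := Gamma_pos_of_pos hx
  rw [gammaRatioSq, div_pow, div_le_iff₀ (by positivity), pow_two (Gamma x), ← mul_assoc,
    mul_comm x, mul_assoc, ← Gamma_add_one hx.ne']
  exact Gamma_add_half_sq_le hx

theorem four_mul_add_one_div_sq_mul_le (hx : 0 < x) :
    (4 * x + 1) / x ^ 2 * gammaRatioSq x ≤
      (4 * (x + 1) + 1) / (x + 1) ^ 2 * gammaRatioSq (x + 1) := by
  rw [add_one hx, mul_left_comm, mul_comm (gammaRatioSq x)]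
  refine mul_le_mul_of_nonneg_right ?_ (pos hx).le
  rw [div_pow, div_mul_div_comm, div_le_div_iff₀ (by positivity) (by positivity)]
  -- `(4x + 5)(x + 1/2)² - (4x + 1)(x + 1)² = 1/4`
  nlinarith [sq_nonneg x]

theorem le_four_mul_sq_div (hx : 0 < x) : gammaRatioSq x ≤ 4 * x ^ 2 / (4 * x + 1) := by
  have hmono : Monotone fun n : ℕ => (4 * (x + n) + 1) / (x + n) ^ 2 * gammaRatioSq (x + n) :=
    monotone_nat_of_le_succ fun n => by
      simpa [add_assoc] using four_mul_add_one_div_sq_mul_le (by positivity : 0 < x + n)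
  have hbound (n : ℕ) :
      (4 * x + 1) / x ^ 2 * gammaRatioSq x ≤ 4 + (x + n)⁻¹ := by
    have hxn : 0 < x + n := by positivity
    calc (4 * x + 1) / x ^ 2 * gammaRatioSq x
        ≤ (4 * (x + n) + 1) / (x + n) ^ 2 * gammaRatioSq (x + n) := by
          simpa using hmono (Nat.zero_le n)
      _ ≤ (4 * (x + n) + 1) / (x + n) ^ 2 * (x + n) :=
          mul_le_mul_of_nonneg_left (le_self hxn) (by positivity)
      _ = 4 + (x + n)⁻¹ := by field_simp
  have hlim : Tendsto (fun n : ℕ => 4 + (x + n)⁻¹) atTop (𝓝 4) := by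
    simpa using tendsto_const_nhds.add
      (tendsto_inv_atTop_zero.comp (tendsto_atTop_add_const_left _ x tendsto_natCast_atTop_atTop))
  have h := ge_of_tendsto' hlim hbound
  rw [le_div_iff₀ (by positivity)]
  rw [div_mul_eq_mul_div, div_le_iff₀ (by positivity)] at h
  linarith

theorem sub_quarter_le (hx : 1 / 2 < x) : x - 1 / 4 ≤ gammaRatioSq x := by
  have hx' : 0 < x - 1 / 2 := by linarith
  have hprod := mul_add_half hx'
  rw [sub_add_cancel] at hprod
  have hle := le_four_mul_sq_div hx'
  rw [le_div_iff₀ (by linarith)] at hle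
  nlinarith [pos hx']

theorem tendsto_sub_self : Tendsto (fun x => gammaRatioSq x - x) atTop (𝓝 (-1 / 4)) := by
  have hlim : Tendsto (fun x : ℝ => -1 / 4 + (16 * x + 4)⁻¹) atTop (𝓝 (-1 / 4)) := by
    simpa using tendsto_const_nhds.add (tendsto_inv_atTop_zero.comp
      (tendsto_atTop_add_const_right _ 4 (tendsto_id.const_mul_atTop (by norm_num : (0 : ℝ) < 16))))
  refine tendsto_of_tendsto_of_tendsto_of_le_of_le' tendsto_const_nhds hlim ?_ ?_
  · filter_upwards [eventually_gt_atTop (1 / 2)] with x hx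
    linarith [sub_quarter_le hx]
  · filter_upwards [eventually_gt_atTop 0] with x hx
    have hle := le_four_mul_sq_div hx
    have hsplit : 4 * x ^ 2 / (4 * x + 1) = x - 1 / 4 + (16 * x + 4)⁻¹ := by
      field_simp; ring
    linarith

end gammaRatioSq

theorem two_mul_gammaRatioSq_half_eq {p : ℝ} (hp : 1 < p) :
    2 * gammaRatioSq (p / 2) = ((p - 1) * Gamma ((p - 1) / 2) / (√2 * Gamma (p / 2))) ^ 2 := by
  have hΓ := (Gamma_pos_of_pos (by linarith : 0 < p / 2)).ne'
  have hnum : (p - 1) * Gamma ((p - 1) / 2) = 2 * Gamma (p / 2 + 1 / 2) := by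
    rw [show p / 2 + 1 / 2 = (p - 1) / 2 + 1 by ring, Gamma_add_one (by linarith)]
    ring
  rw [hnum, gammaRatioSq, div_pow, div_pow, mul_pow, mul_pow, sq_sqrt zero_le_two]
  field_simp

/-- The sequence `r_p = p - [(p-1)Γ((p-1)/2)/(√2 Γ(p/2))]²` converges to `1/2`
as `p → ∞`. -/
theorem stmt_4 :
    Tendsto (fun p : ℕ =>
        (p : ℝ) - (((p : ℝ) - 1) * Real.Gamma (((p : ℝ) - 1) / 2) /
            (Real.sqrt 2 * Real.Gamma ((p : ℝ) / 2))) ^ 2)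
      atTop (nhds (1 / 2)) := by
  have hlim : Tendsto (fun p : ℕ => -2 * (gammaRatioSq ((p : ℝ) / 2) - (p : ℝ) / 2))
      atTop (𝓝 (1 / 2)) := by
    convert (gammaRatioSq.tendsto_sub_self.comp
      (tendsto_natCast_atTop_atTop.atTop_div_const two_pos)).const_mul (-2) using 2 <;> norm_num
  refine hlim.congr' ?_
  filter_upwards [eventually_ge_atTop 2] with p hp
  rw [← two_mul_gammaRatioSq_half_eq (by exact_mod_cast hp)]
  ring
end

section
/- Let D(a) be the p×p matrix with entries D(a)_{ij} = a^{|i-j|}/(1-a²), where |a| ≤ α < 1. Then the maximal eigenvalue of D(a) satisfies λ_max(D(a)) ≤ 1/(1-α)². -/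
/-- Let `D(a)` be the `p×p` matrix with entries `a^{|i-j|}/(1-a²)`, where
`|a| ≤ α < 1`.  Then the maximal eigenvalue of `D(a)` satisfies
`λ_max(D(a)) ≤ 1/(1-α)²`. -/
theorem stmt_6 (p : ℕ) (hp : 1 ≤ p) (a α : ℝ) (haα : |a| ≤ α) (hα : α < 1)
    (D : Matrix (Fin p) (Fin p) ℝ)
    (hD : ∀ i j : Fin p, D i j = a ^ ((i : ℤ) - (j : ℤ)).natAbs / (1 - a ^ 2))
    (hH : D.IsHermitian) :
    haveI : Nonempty (Fin p) := Fin.pos_iff_nonempty.mp hp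
    (⨆ i, hH.eigenvalues i) ≤ 1 / (1 - α) ^ 2 := by
  haveI : Nonempty (Fin p) := Fin.pos_iff_nonempty.mp hp
  show (⨆ i, hH.eigenvalues i) ≤ 1 / (1 - α) ^ 2
  set b := |a| with hbdef
  have hb0 : 0 ≤ b := abs_nonneg a
  have hb1 : b < 1 := lt_of_le_of_lt haα hα
  have h1b : 0 < 1 - b := by linarith
  have h1α : 0 < 1 - α := by linarith
  have ha2eq : 1 - a ^ 2 = (1 - b) * (1 + b) := by
    rw [hbdef, ← sq_abs]; ring
  have ha2 : 0 < 1 - a ^ 2 := by rw [ha2eq]; positivity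
  -- geometric sum bound
  have hgeom : ∀ n : ℕ, ∑ k ∈ Finset.range n, b ^ k ≤ 1 / (1 - b) := by
    intro n
    rw [geom_sum_eq (by intro h; rw [h] at hb1; exact lt_irrefl 1 hb1) n,
      show b - 1 = -(1 - b) by ring, show b ^ n - 1 = -(1 - b ^ n) by ring,
      neg_div_neg_eq]
    exact (div_le_div_iff_of_pos_right h1b).2 (by nlinarith [pow_nonneg hb0 n])
  -- row sum bound
  have hrow : ∀ i : Fin p, ∑ j, |D i j| ≤ 1 / (1 - α) ^ 2 := by
    intro i
    have hsum : ∑ j : Fin p, b ^ ((i : ℤ) - (j : ℤ)).natAbs ≤ (1 + b) / (1 - b) := by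
      have hcast : ∑ j : Fin p, b ^ ((i : ℤ) - (j : ℤ)).natAbs
          = ∑ j ∈ Finset.range p, b ^ ((i : ℤ) - (j : ℤ)).natAbs := by
        rw [← Fin.sum_univ_eq_sum_range (fun j : ℕ => b ^ ((i : ℤ) - (j : ℤ)).natAbs) p]
      rw [hcast]
      have hsplit : ∑ j ∈ Finset.range p, b ^ ((i : ℤ) - (j : ℤ)).natAbs
          = (∑ j ∈ Finset.range (i.val + 1), b ^ ((i : ℤ) - (j : ℤ)).natAbs)
            + ∑ j ∈ Finset.Ico (i.val + 1) p, b ^ ((i : ℤ) - (j : ℤ)).natAbs := by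
        rw [← Finset.sum_range_add_sum_Ico _ (show i.val + 1 ≤ p from i.isLt)]
      rw [hsplit]
      have h1 : (∑ j ∈ Finset.range (i.val + 1), b ^ ((i : ℤ) - (j : ℤ)).natAbs)
          ≤ 1 / (1 - b) := by
        have : ∀ j ∈ Finset.range (i.val + 1),
            b ^ ((i : ℤ) - (j : ℤ)).natAbs = b ^ (i.val - j) := by
          intro j hj
          rw [Finset.mem_range] at hj
          congr 1
          have : (i : ℤ) = (i.val : ℤ) := rfl
          omega
        rw [Finset.sum_congr rfl this]
        have := Finset.sum_range_reflect (fun k => b ^ k) (i.val + 1)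
        simp only [Nat.add_sub_cancel] at this
        rw [this]
        exact hgeom _
      have h2 : (∑ j ∈ Finset.Ico (i.val + 1) p, b ^ ((i : ℤ) - (j : ℤ)).natAbs)
          ≤ b / (1 - b) := by
        have : ∀ j ∈ Finset.Ico (i.val + 1) p,
            b ^ ((i : ℤ) - (j : ℤ)).natAbs = b * b ^ (j - (i.val + 1)) := by
          intro j hj
          rw [Finset.mem_Ico] at hj
          rw [← pow_succ']
          congr 1
          have : (i : ℤ) = (i.val : ℤ) := rfl
          omega
        rw [Finset.sum_congr rfl this, ← Finset.mul_sum]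
        have hre : ∑ j ∈ Finset.Ico (i.val + 1) p, b ^ (j - (i.val + 1))
            = ∑ k ∈ Finset.range (p - (i.val + 1)), b ^ k := by
          rw [Finset.sum_Ico_eq_sum_range]
          exact Finset.sum_congr rfl fun k _ => by rw [Nat.add_sub_cancel_left]
        rw [hre, div_eq_mul_one_div b (1 - b)]
        exact mul_le_mul_of_nonneg_left (hgeom _) hb0
      calc _ ≤ 1 / (1 - b) + b / (1 - b) := add_le_add h1 h2
        _ = (1 + b) / (1 - b) := by ring
    have habs : ∀ j : Fin p, |D i j| = b ^ ((i : ℤ) - (j : ℤ)).natAbs / (1 - a ^ 2) := by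
      intro j
      rw [hD i j, abs_div, abs_of_pos ha2, abs_pow, hbdef]
    calc ∑ j, |D i j| = (∑ j : Fin p, b ^ ((i : ℤ) - (j : ℤ)).natAbs) / (1 - a ^ 2) := by
          rw [Finset.sum_div]; exact Finset.sum_congr rfl fun j _ => habs j
      _ ≤ ((1 + b) / (1 - b)) / (1 - a ^ 2) :=
          div_le_div_of_nonneg_right hsum ha2.le |>.trans_eq rfl
      _ ≤ 1 / (1 - α) ^ 2 := by
          rw [ha2eq, div_div, div_le_div_iff₀ (by positivity) (by positivity)]
          nlinarith [mul_nonneg (sub_nonneg.2 haα) h1b.le,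
            mul_nonneg (mul_nonneg (sub_nonneg.2 haα) h1b.le) h1α.le,
            mul_nonneg (sub_nonneg.2 haα) h1α.le,
            mul_nonneg hb0 (mul_nonneg (sub_nonneg.2 haα) h1α.le)]
  -- eigenvalue bound
  apply ciSup_le
  intro k
  set μ := hH.eigenvalues k with hμ
  set v : Fin p → ℝ := ⇑(hH.eigenvectorBasis k) with hv
  have hvne : v ≠ 0 := by
    have := hH.eigenvectorBasis.orthonormal.ne_zero k
    intro h
    apply this
    ext j
    exact congrFun h j
  obtain ⟨j, hj⟩ : ∃ j, v j ≠ 0 := by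
    by_contra h
    push_neg at h
    exact hvne (funext h)
  obtain ⟨j0, -, hj0⟩ := Finset.exists_max_image Finset.univ (fun j => |v j|)
    ⟨j, Finset.mem_univ j⟩
  have hj0pos : 0 < |v j0| :=
    lt_of_lt_of_le (abs_pos.2 hj) (hj0 j (Finset.mem_univ j))
  have heig := congrFun (hH.mulVec_eigenvectorBasis k) j0
  have heq : ∑ l, D j0 l * v l = μ * v j0 := by
    simpa [Matrix.mulVec, dotProduct] using heig
  have key : |μ| * |v j0| ≤ (∑ l, |D j0 l|) * |v j0| := by
    calc |μ| * |v j0| = |∑ l, D j0 l * v l| := by rw [← abs_mul, heq]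
      _ ≤ ∑ l, |D j0 l * v l| := Finset.abs_sum_le_sum_abs _ _
      _ ≤ ∑ l, |D j0 l| * |v j0| := by
          apply Finset.sum_le_sum
          intro l _
          rw [abs_mul]
          exact mul_le_mul_of_nonneg_left (hj0 l (Finset.mem_univ l)) (abs_nonneg _)
      _ = (∑ l, |D j0 l|) * |v j0| := by rw [← Finset.sum_mul]
  have hμle : |μ| ≤ ∑ l, |D j0 l| := le_of_mul_le_mul_right key hj0pos
  calc μ ≤ |μ| := le_abs_self μ
    _ ≤ ∑ l, |D j0 l| := hμle
    _ ≤ 1 / (1 - α) ^ 2 := hrow j0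
end

section
/- Let D(a) be the p×p AR(1) covariance matrix with entries a^{|i-j|}/(1-a²), |a| ≤ α < 1. Then tr D(a) - λ_max(D(a)) ≥ p - 1/(1-α)². -/
lemma geom_aux (n : ℕ) (α : ℝ) (h0 : 0 ≤ α) (h1 : α < 1) :
    ∑ i ∈ Finset.range n, α ^ i ≤ 1 / (1 - α) := by
  have h : (0:ℝ) < 1 - α := by linarith
  rw [geom_sum_eq (ne_of_lt h1)]
  rw [show (α ^ n - 1) / (α - 1) = (1 - α ^ n) / (1 - α) by rw [← neg_div_neg_eq]; ring_nf]
  have := pow_nonneg h0 n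
  gcongr
  linarith

lemma row_aux (p k : ℕ) (hk : k < p) (α : ℝ) (h0 : 0 ≤ α) (h1 : α < 1) :
    ∑ j ∈ Finset.range p, α ^ (((k:ℤ) - j).natAbs) ≤ (1 + α) / (1 - α) := by
  have h : (0:ℝ) < 1 - α := by linarith
  rw [Finset.range_eq_Ico, ← Finset.sum_Ico_consecutive _ (Nat.zero_le (k+1)) hk]
  have e1 : ∑ j ∈ Finset.Ico 0 (k+1), α ^ (((k:ℤ) - j).natAbs)
      = ∑ j ∈ Finset.range (k+1), α ^ j := by
    rw [← Finset.range_eq_Ico, ← Finset.sum_range_reflect]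
    apply Finset.sum_congr rfl
    intro j hj
    rw [Finset.mem_range] at hj
    congr 1
    omega
  have e2 : ∑ j ∈ Finset.Ico (k+1) p, α ^ (((k:ℤ) - j).natAbs)
      = α * ∑ i ∈ Finset.range (p - (k+1)), α ^ i := by
    rw [Finset.sum_Ico_eq_sum_range, Finset.mul_sum]
    apply Finset.sum_congr rfl
    intro i _
    have : ((k:ℤ) - ((k + 1 + i : ℕ) : ℤ)).natAbs = i + 1 := by push_cast; omega
    rw [this]
    ring
  rw [e1, e2]
  have g1 := geom_aux (k+1) α h0 h1
  have g2 := geom_aux (p - (k+1)) α h0 h1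
  have : α * ∑ i ∈ Finset.range (p - (k+1)), α ^ i ≤ α * (1 / (1 - α)) := by
    apply mul_le_mul_of_nonneg_left g2 h0
  rw [show (1 + α) / (1 - α) = 1 / (1 - α) + α * (1 / (1 - α)) by field_simp]
  linarith

/-- Let `D(a)` be the `p×p` AR(1) covariance matrix with entries
`a^{|i-j|}/(1-a²)`, `|a| ≤ α < 1`.  Then
`tr D(a) - λ_max(D(a)) ≥ p - 1/(1-α)²`. -/
theorem stmt_7 (p : ℕ) (hp : 1 ≤ p) (a α : ℝ) (haα : |a| ≤ α) (hα : α < 1)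
    (D : Matrix (Fin p) (Fin p) ℝ)
    (hD : ∀ i j : Fin p, D i j = a ^ ((i : ℤ) - (j : ℤ)).natAbs / (1 - a ^ 2))
    (hH : D.IsHermitian) :
    haveI : Nonempty (Fin p) := Fin.pos_iff_nonempty.mp hp
    (p : ℝ) - 1 / (1 - α) ^ 2 ≤ D.trace - ⨆ i, hH.eigenvalues i := by
  haveI : Nonempty (Fin p) := Fin.pos_iff_nonempty.mp hp
  have h0 : 0 ≤ α := le_trans (abs_nonneg a) haα
  have ha2 : a ^ 2 ≤ α ^ 2 := by
    rw [← sq_abs]; exact pow_le_pow_left₀ (abs_nonneg a) haα 2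
  have hα2 : α ^ 2 < 1 := by nlinarith
  have hpos : (0:ℝ) < 1 - a ^ 2 := by nlinarith
  have hpos' : (0:ℝ) < 1 - α ^ 2 := by nlinarith
  have h1α : (0:ℝ) < 1 - α := by linarith
  -- trace
  have htr : (p : ℝ) ≤ D.trace := by
    rw [Matrix.trace]
    have : ∀ i : Fin p, D.diag i = 1 / (1 - a ^ 2) := by
      intro i
      rw [Matrix.diag_apply, hD i i]
      simp
    rw [Finset.sum_congr rfl (fun i _ => this i), Finset.sum_const, Finset.card_univ,
      Fintype.card_fin, nsmul_eq_mul]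
    have h1 : (1:ℝ) ≤ 1 / (1 - a ^ 2) := by
      rw [le_div_iff₀ hpos]; nlinarith
    nlinarith [(Nat.one_le_cast.mpr hp : (1:ℝ) ≤ (p:ℝ))]
  -- eigenvalue bound
  have hsup : (⨆ i, hH.eigenvalues i) ≤ 1 / (1 - α) ^ 2 := by
    apply ciSup_le
    intro i
    have hev : Module.End.HasEigenvalue (Matrix.toLin' D) (hH.eigenvalues i) := by
      apply Module.End.hasEigenvalue_of_hasEigenvector
        (x := (hH.eigenvectorBasis i : Fin p → ℝ))
      constructor
      · rw [Module.End.mem_eigenspace_iff]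
        have := hH.mulVec_eigenvectorBasis i
        simpa [Matrix.toLin'_apply] using this
      · intro h
        exact (hH.eigenvectorBasis).orthonormal.ne_zero i (by ext j; exact congrFun h j)
    obtain ⟨k, hk⟩ := eigenvalue_mem_ball hev
    rw [Metric.mem_closedBall, Real.dist_eq] at hk
    have hkk : hH.eigenvalues i ≤ ∑ j : Fin p, |D k j| := by
      have hsplit : ∑ j : Fin p, |D k j|
          = |D k k| + ∑ j ∈ Finset.univ.erase k, |D k j| := by
        rw [← Finset.add_sum_erase _ _ (Finset.mem_univ k)]
      have hDkk : 0 ≤ D k k := by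
        rw [hD k k]
        have hz : ((k:ℤ) - (k:ℤ)).natAbs = 0 := by omega
        rw [hz, pow_zero]
        exact le_of_lt (div_pos one_pos hpos)
      have habs := abs_sub_abs_le_abs_sub (hH.eigenvalues i) (D k k)
      have : hH.eigenvalues i - D k k ≤ ∑ j ∈ Finset.univ.erase k, ‖D k j‖ :=
        le_trans (le_abs_self _) hk
      simp only [Real.norm_eq_abs] at this ⊢
      rw [hsplit, abs_of_nonneg hDkk]
      linarith
    refine le_trans hkk ?_
    -- bound the row sum
    have hterm : ∀ j : Fin p, |D k j| ≤ α ^ (((k:ℤ) - (j:ℤ)).natAbs) / (1 - a ^ 2) := by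
      intro j
      rw [hD k j, abs_div, abs_of_pos hpos, abs_pow]
      gcongr
    calc ∑ j : Fin p, |D k j|
        ≤ ∑ j : Fin p, α ^ (((k:ℤ) - (j:ℤ)).natAbs) / (1 - a ^ 2) :=
          Finset.sum_le_sum fun j _ => hterm j
      _ = (∑ j : Fin p, α ^ (((k:ℤ) - (j:ℤ)).natAbs)) / (1 - a ^ 2) := by
          rw [Finset.sum_div]
      _ ≤ ((1 + α) / (1 - α)) / (1 - α ^ 2) := by
          apply div_le_div₀ (by positivity) ?_ hpos' (by linarith)
          have := row_aux p (k : ℕ) k.isLt α h0 hα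
          rw [Fin.sum_univ_eq_sum_range (fun j => α ^ (((k:ℕ):ℤ) - (j:ℤ)).natAbs) p]
          exact this
      _ = 1 / (1 - α) ^ 2 := by
          rw [div_div]
          rw [show (1 - α ^ 2) = (1 - α) * (1 + α) by ring]
          rw [eq_div_iff (by positivity)]
          field_simp
  linarith
end
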